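/- arXiv:1609.01028 — 4 statements merged into one kernel-verified Lean document; each statement's English description precedes it below -/
import Mathlib

section
/- For every fixed vertex s_a ∈ V and h_a ∈ ℕ, the observer's set Ŝ coincides with the set of vertices consistent with the observed transmit set: Ŝ = {s ∈ V : ∃ h ∈ ℕ, T(s,h) = T(s_a,h_a)}. -/
open Classical

namespace Privacy

variable {V : Type*}

/-- The sphere of radius `δ` around `s`: vertices at graph distance exactly `δ` from `s`. -/
def sphere (G : SimpleGraph V) (s : V) (δ : ℕ) : Set V := {j | G.dist s j = δ}

/-- The transmit set `T(s,h)`: vertices at distance at least `h+1` from `s`. -/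
def transmit (G : SimpleGraph V) (s : V) (h : ℕ) : Set V := {i | h + 1 ≤ G.dist i s}

/-- The complement `S̃(s,h)` of the transmit set: vertices at distance at most `h` from `s`. -/
def sTilde (G : SimpleGraph V) (s : V) (h : ℕ) : Set V := {i | G.dist i s ≤ h}

/-- The boundary `B(s,h)`: vertices of `T(s,h)` having a neighbor in `S̃(s,h)`. -/
def boundarySet (G : SimpleGraph V) (s : V) (h : ℕ) : Set V :=
  {i | i ∈ transmit G s h ∧ ∃ j, G.Adj i j ∧ j ∈ sTilde G s h}

/-- The observer's set `Ŝ` for a fixed private vertex `sa` and threshold `ha`. -/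
def obsSet (G : SimpleGraph V) (sa : V) (ha : ℕ) : Set V :=
  {s | s ∈ sTilde G sa ha ∧ ∃ δ : ℕ, 1 ≤ δ ∧ sphere G s δ = boundarySet G sa ha ∧
    (⋃ δ' < δ, sphere G s δ') = sTilde G sa ha}

/-- For every fixed vertex `sa` and `ha : ℕ`, the observer's set `Ŝ` coincides with
the set of vertices consistent with the observed transmit set:
`Ŝ = {s : ∃ h, T(s,h) = T(sa,ha)}`. -/
theorem obsSet_eq_consistent (G : SimpleGraph V) [Fintype V] (hG : G.Connected)
    (sa : V) (ha : ℕ) :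
    obsSet G sa ha = {s : V | ∃ h : ℕ, transmit G s h = transmit G sa ha} := by
  ext s
  simp only [obsSet, Set.mem_setOf_eq]
  constructor
  · rintro ⟨hs, δ, hδ1, hsph, hun⟩
    refine ⟨δ - 1, ?_⟩
    ext i
    have key : i ∈ sTilde G s (δ - 1) ↔ i ∈ sTilde G sa ha := by
      rw [← hun]
      simp only [sTilde, sphere, Set.mem_setOf_eq, Set.mem_iUnion]
      rw [SimpleGraph.dist_comm (G := G) (u := i) (v := s)]
      constructor
      · intro hi
        exact ⟨G.dist s i, by omega, rfl⟩
      · rintro ⟨δ', hδ', rfl⟩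
        omega
    simp only [sTilde, Set.mem_setOf_eq] at key
    simp only [transmit, Set.mem_setOf_eq]
    omega
  · rintro ⟨h, ht⟩
    have hst : ∀ i, G.dist i s ≤ h ↔ G.dist i sa ≤ ha := by
      intro i
      have := Set.ext_iff.mp ht i
      simp only [transmit, Set.mem_setOf_eq] at this
      omega
    refine ⟨(hst s).mp (by simp [G.dist_self]), h + 1, le_add_self, ?_, ?_⟩
    · ext i
      simp only [sphere, boundarySet, transmit, sTilde, Set.mem_setOf_eq]
      rw [SimpleGraph.dist_comm (G := G) (u := s) (v := i)]
      constructor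
      · intro hi
        refine ⟨by have := hst i; omega, ?_⟩
        obtain ⟨q, hq⟩ := hG.exists_walk_length_eq_dist i s
        rw [hi] at hq
        cases q with
        | nil => simp at hq
        | cons hadj r =>
          refine ⟨_, hadj, (hst _).mp ?_⟩
          have := SimpleGraph.dist_le r
          simp [SimpleGraph.Walk.length_cons] at hq
          omega
      · rintro ⟨h1, j, hadj, hj⟩
        rw [← hst j] at hj
        have h2 : G.dist i j = 1 := SimpleGraph.dist_eq_one_iff_adj.mpr hadj
        have h3 := hG.dist_triangle (u := i) (v := j) (w := s)
        have := hst i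
        omega
    · ext i
      simp only [sphere, Set.mem_setOf_eq, Set.mem_iUnion, sTilde]
      rw [← hst i, SimpleGraph.dist_comm (G := G) (u := i) (v := s)]
      constructor
      · rintro ⟨δ', hδ', rfl⟩
        omega
      · intro hi
        exact ⟨G.dist s i, by omega, rfl⟩

end Privacy
end

section
/- (Theorem 1) Fix s_a ∈ V and h_a ∈ ℕ. Define the likelihood L : V → ℝ by L(s) = 1 if there exists h ∈ ℕ with T(s,h) = T(s_a,h_a) and L(s) = 0 otherwise, and define the posterior (Bayes' rule with uniform prior on V) by p(s) = L(s) / Σ_{v ∈ V} L(v). Then for every s ∈ V, p(s) = (1/|Ŝ|)·𝟙[s ∈ Ŝ]; in particular the privacy-infringement measure satisfies π_a := p(s_a) = 1/|Ŝ|. -/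
open Classical

namespace Privacy

variable {V : Type*}

lemma sTilde_eq_compl (G : SimpleGraph V) (s : V) (h : ℕ) :
    sTilde G s h = (transmit G s h)ᶜ := by
  ext i
  simp [sTilde, transmit, Nat.lt_succ_iff, not_le]

lemma union_spheres (G : SimpleGraph V) (s : V) (δ : ℕ) :
    (⋃ δ' < δ, sphere G s δ') = {i | G.dist s i < δ} := by
  ext i
  simp only [Set.mem_iUnion, sphere, Set.mem_setOf_eq]
  constructor
  · rintro ⟨d, hd, h⟩; omega
  · intro h; exact ⟨_, h, rfl⟩

lemma sphere_succ_eq_boundary (G : SimpleGraph V) (hG : G.Connected) (s : V) (h : ℕ) :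
    sphere G s (h + 1) = boundarySet G s h := by
  ext i
  simp only [sphere, boundarySet, transmit, sTilde, Set.mem_setOf_eq]
  constructor
  · intro hd
    have hd' : G.dist i s = h + 1 := by rwa [SimpleGraph.dist_comm] at hd
    refine ⟨le_of_eq hd'.symm, ?_⟩
    obtain ⟨p, hp⟩ := (hG i s).exists_walk_length_eq_dist
    rw [hd'] at hp
    cases p with
    | nil => simp at hp
    | cons hadj q =>
        refine ⟨_, hadj, ?_⟩
        calc G.dist _ s ≤ q.length := SimpleGraph.dist_le q
        _ = h := by simpa using hp
  · rintro ⟨h1, j, hadj, h2⟩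
    have htri : G.dist s i ≤ G.dist s j + G.dist j i := hG.dist_triangle
    have hji : G.dist j i ≤ 1 := SimpleGraph.dist_le hadj.symm.toWalk
    have : G.dist s i ≤ h + 1 := by
      rw [SimpleGraph.dist_comm] at h2; omega
    rw [SimpleGraph.dist_comm] at h1
    omega

lemma mem_obsSet_iff (G : SimpleGraph V) (hG : G.Connected) (sa : V) (ha : ℕ) (s : V) :
    s ∈ obsSet G sa ha ↔ ∃ h : ℕ, transmit G s h = transmit G sa ha := by
  constructor
  · rintro ⟨-, δ, hδ, -, hun⟩
    refine ⟨δ - 1, ?_⟩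
    have h1 : (⋃ δ' < δ, sphere G s δ') = {i | G.dist s i < δ} := union_spheres G s δ
    rw [h1] at hun
    have : (sTilde G s (δ - 1)) = sTilde G sa ha := by
      rw [← hun]; ext i
      simp only [sTilde, Set.mem_setOf_eq, SimpleGraph.dist_comm (u := i)]
      omega
    have hc := congrArg compl this
    rwa [sTilde_eq_compl, sTilde_eq_compl, compl_compl, compl_compl] at hc
  · rintro ⟨h, hT⟩
    have hS : sTilde G s h = sTilde G sa ha := by
      rw [sTilde_eq_compl, sTilde_eq_compl, hT]
    have hB : boundarySet G s h = boundarySet G sa ha := by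
      unfold boundarySet; rw [hT, hS]
    refine ⟨?_, h + 1, le_add_self, ?_, ?_⟩
    · rw [← hS]; simp [sTilde, SimpleGraph.dist_self]
    · rw [sphere_succ_eq_boundary G hG, hB]
    · rw [union_spheres, ← hS]
      ext i
      simp only [sTilde, Set.mem_setOf_eq, SimpleGraph.dist_comm (u := s)]
      omega

/-- Theorem 1: Fix `sa ∈ V` and `ha : ℕ`.  Define the likelihood `L : V → ℝ` by
`L s = 1` if there exists `h` with `T(s,h) = T(sa,ha)` and `L s = 0` otherwise, and define the
posterior (Bayes' rule with uniform prior on `V`) by `p s = L s / ∑ v, L v`.  Then for every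
`s : V`, `p s = (1/|Ŝ|)·𝟙[s ∈ Ŝ]`; in particular `π_a := p sa = 1/|Ŝ|`. -/
theorem posterior_uniform_prior (G : SimpleGraph V) [Fintype V] (hG : G.Connected)
    (sa : V) (ha : ℕ) (L p : V → ℝ)
    (hL : ∀ s : V, L s = if ∃ h : ℕ, transmit G s h = transmit G sa ha then 1 else 0)
    (hp : ∀ s : V, p s = L s / ∑ v : V, L v) :
    (∀ s : V, p s = (1 / ((obsSet G sa ha).ncard : ℝ)) * (if s ∈ obsSet G sa ha then 1 else 0)) ∧
      p sa = 1 / ((obsSet G sa ha).ncard : ℝ) := by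
  have hL' : ∀ s : V, L s = if s ∈ obsSet G sa ha then 1 else 0 := by
    intro s
    rw [hL s]
    simp [mem_obsSet_iff G hG sa ha s]
  have hsa : sa ∈ obsSet G sa ha := (mem_obsSet_iff G hG sa ha sa).2 ⟨ha, rfl⟩
  have hsum : (∑ v : V, L v) = ((obsSet G sa ha).ncard : ℝ) := by
    simp only [hL']
    rw [Finset.sum_boole]
    congr 1
    rw [Set.ncard_eq_toFinset_card']
    congr 1
    ext v
    simp
  have hpos : (0:ℝ) < ((obsSet G sa ha).ncard : ℝ) := by
    have : 0 < (obsSet G sa ha).ncard :=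
      (Set.ncard_pos (Set.toFinite _)).mpr ⟨sa, hsa⟩
    exact_mod_cast this
  have main : ∀ s : V, p s = (1 / ((obsSet G sa ha).ncard : ℝ)) *
      (if s ∈ obsSet G sa ha then 1 else 0) := by
    intro s
    rw [hp, hL', hsum]
    ring
  exact ⟨main, by rw [main sa]; simp [hsa]⟩

end Privacy
end

section
/- (Theorem 3) Fix s_a ∈ V and h_a ∈ ℕ, and let ρ : V → ℝ be a strictly positive density function. Define the prior q(s) = ρ(s)/Σ_{v ∈ V} ρ(v), the likelihood L(s) = 1 if there exists h ∈ ℕ with T(s,h) = T(s_a,h_a) and L(s) = 0 otherwise, and the posterior p(s) = L(s)·q(s) / Σ_{v ∈ V} L(v)·q(v). Then for every s ∈ V, p(s) = (ρ(s)/Σ_{v ∈ Ŝ} ρ(v))·𝟙[s ∈ Ŝ]; in particular π_a := p(s_a) = ρ(s_a)/Σ_{v ∈ Ŝ} ρ(v). -/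
open Classical

namespace Privacy

variable {V : Type*}

/-- If `dist i s = n+1` (connected), there is a neighbor `j` of `i` with `dist j s ≤ n`. -/
lemma exists_adj_dist_le (G : SimpleGraph V) (hG : G.Connected) {i s : V} {n : ℕ}
    (hd : G.dist i s = n + 1) : ∃ j, G.Adj i j ∧ G.dist j s ≤ n := by
  obtain ⟨p, hp⟩ := (hG i s).exists_walk_length_eq_dist
  rw [hd] at hp
  cases p with
  | nil => simp at hp
  | cons hadj q =>
    refine ⟨_, hadj, ?_⟩
    have := SimpleGraph.dist_le q
    simp [SimpleGraph.Walk.length_cons] at hp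
    omega

/-- The observer's set is exactly the set of vertices whose transmit set can match `T(sa,ha)`. -/
lemma obsSet_eq (G : SimpleGraph V) (hG : G.Connected) (sa : V) (ha : ℕ) :
    obsSet G sa ha = {s | ∃ h : ℕ, transmit G s h = transmit G sa ha} := by
  ext s
  constructor
  · rintro ⟨-, δ, hδ1, -, hU⟩
    refine ⟨δ - 1, ?_⟩
    have hST : sTilde G s (δ - 1) = sTilde G sa ha := by
      rw [← hU]; ext i
      simp only [Set.mem_iUnion, sphere, sTilde, Set.mem_setOf_eq]
      constructor
      · intro hi
        exact ⟨G.dist i s, by omega, SimpleGraph.dist_comm⟩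
      · rintro ⟨δ', hδ', hd⟩
        rw [SimpleGraph.dist_comm] at hd
        omega
    ext i
    have h1 := Set.ext_iff.mp hST i
    simp only [sTilde, Set.mem_setOf_eq] at h1
    simp only [transmit, Set.mem_setOf_eq]
    omega
  · rintro ⟨h, hT⟩
    have hST : sTilde G s h = sTilde G sa ha := by
      ext i
      have h1 := Set.ext_iff.mp hT i
      simp only [transmit, Set.mem_setOf_eq] at h1
      simp only [sTilde, Set.mem_setOf_eq]
      omega
    have hs : s ∈ sTilde G sa ha := by
      rw [← hST]; simp [sTilde, SimpleGraph.dist_self]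
    refine ⟨hs, h + 1, by omega, ?_, ?_⟩
    · ext i
      simp only [sphere, boundarySet, Set.mem_setOf_eq]
      constructor
      · intro hd
        rw [SimpleGraph.dist_comm] at hd
        obtain ⟨j, hadj, hj⟩ := exists_adj_dist_le G hG hd
        refine ⟨?_, j, hadj, ?_⟩
        · rw [← hT]; simp only [transmit, Set.mem_setOf_eq]; omega
        · rw [← hST]; simpa [sTilde] using hj
      · rintro ⟨hi, j, hadj, hj⟩
        rw [← hT] at hi
        rw [← hST] at hj
        simp only [transmit, Set.mem_setOf_eq] at hi
        simp only [sTilde, Set.mem_setOf_eq] at hj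
        have htri := hG.dist_triangle (u := i) (v := j) (w := s)
        have : G.dist i j = 1 := (SimpleGraph.dist_eq_one_iff_adj).mpr hadj
        rw [SimpleGraph.dist_comm]
        omega
    · rw [← hST]
      ext i
      simp only [Set.mem_iUnion, sphere, sTilde, Set.mem_setOf_eq]
      constructor
      · rintro ⟨δ', hδ', hd⟩
        rw [SimpleGraph.dist_comm] at hd; omega
      · intro hi
        exact ⟨G.dist i s, by omega, SimpleGraph.dist_comm⟩

/-- Theorem 3: Fix `sa ∈ V` and `ha : ℕ`, and let `ρ : V → ℝ` be a strictly
positive density.  Define the prior `q s = ρ s / ∑ v, ρ v`, the likelihood `L s = 1` if there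
exists `h` with `T(s,h) = T(sa,ha)` and `L s = 0` otherwise, and the posterior
`p s = L s · q s / ∑ v, L v · q v`.  Then for every `s : V`,
`p s = (ρ s / ∑_{v ∈ Ŝ} ρ v)·𝟙[s ∈ Ŝ]`; in particular `π_a := p sa = ρ sa / ∑_{v ∈ Ŝ} ρ v`. -/
theorem posterior_density_prior (G : SimpleGraph V) [Fintype V] (hG : G.Connected)
    (sa : V) (ha : ℕ) (ρ : V → ℝ) (hρ : ∀ v : V, 0 < ρ v) (q L p : V → ℝ)
    (hq : ∀ s : V, q s = ρ s / ∑ v : V, ρ v)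
    (hL : ∀ s : V, L s = if ∃ h : ℕ, transmit G s h = transmit G sa ha then 1 else 0)
    (hp : ∀ s : V, p s = L s * q s / ∑ v : V, L v * q v) :
    (∀ s : V, p s = (ρ s / ∑ v ∈ (obsSet G sa ha).toFinset, ρ v) *
        (if s ∈ obsSet G sa ha then 1 else 0)) ∧
      p sa = ρ sa / ∑ v ∈ (obsSet G sa ha).toFinset, ρ v := by
  have hO := obsSet_eq G hG sa ha
  have hL' : ∀ s : V, L s = if s ∈ obsSet G sa ha then 1 else 0 := by
    intro s; rw [hL s, hO]; rfl
  have hsa : sa ∈ obsSet G sa ha := by rw [hO]; exact ⟨ha, rfl⟩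
  have hTpos : (0:ℝ) < ∑ v : V, ρ v :=
    Finset.sum_pos (fun v _ => hρ v) ⟨sa, Finset.mem_univ sa⟩
  have hSpos : (0:ℝ) < ∑ v ∈ (obsSet G sa ha).toFinset, ρ v :=
    Finset.sum_pos (fun v _ => hρ v) ⟨sa, by simpa using hsa⟩
  have hfin : (obsSet G sa ha).toFinset = Finset.univ.filter (· ∈ obsSet G sa ha) := by
    ext v; simp
  have hden : ∑ v : V, L v * q v =
      (∑ v ∈ (obsSet G sa ha).toFinset, ρ v) / ∑ v : V, ρ v := by
    rw [hfin, Finset.sum_filter, Finset.sum_div]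
    apply Finset.sum_congr rfl
    intro v _
    rw [hL' v, hq v]
    by_cases hv : v ∈ obsSet G sa ha <;> simp [hv]
  have main : ∀ s : V, p s = (ρ s / ∑ v ∈ (obsSet G sa ha).toFinset, ρ v) *
      (if s ∈ obsSet G sa ha then 1 else 0) := by
    intro s
    rw [hp s, hden, hL' s, hq s]
    by_cases hs : s ∈ obsSet G sa ha <;> simp [hs]
    field_simp
  refine ⟨main, ?_⟩
  rw [main sa, if_pos hsa, mul_one]

end Privacy
end

section
/- Minimality of the observer's set: fix s_a ∈ V and h_a ∈ ℕ. For every set W ⊆ V with the property that every vertex s for which there exists h ∈ ℕ with T(s,h) = T(s_a,h_a) belongs to W, one has Ŝ ⊆ W. Together with the fact that every s ∈ Ŝ admits such an h, Ŝ is the smallest subset of V that is guaranteed to contain the private vertex s_a. -/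
open Classical

namespace Privacy

variable {V : Type*}

/-- Minimality of the observer's set: fix `sa ∈ V` and `ha : ℕ`.  For every set
`W ⊆ V` such that every vertex `s`, for which there exists `h` with `T(s,h) = T(sa,ha)`,
belongs to `W`, one has `Ŝ ⊆ W`.  Together with the fact that every `s ∈ Ŝ` admits such an
`h`, the set `Ŝ` is the smallest subset of `V` guaranteed to contain the private vertex. -/
theorem obsSet_minimal (G : SimpleGraph V) [Fintype V] (hG : G.Connected)
    (sa : V) (ha : ℕ) :
    (∀ W : Set V, {s : V | ∃ h : ℕ, transmit G s h = transmit G sa ha} ⊆ W →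
        obsSet G sa ha ⊆ W) ∧
      ∀ s ∈ obsSet G sa ha, ∃ h : ℕ, transmit G s h = transmit G sa ha := by
  have key : ∀ s ∈ obsSet G sa ha, ∃ h : ℕ, transmit G s h = transmit G sa ha := by
    rintro s ⟨-, δ, hδ1, -, hunion⟩
    refine ⟨δ - 1, ?_⟩
    have hcompl : sTilde G s (δ - 1) = sTilde G sa ha := by
      rw [← hunion]
      ext x
      have hc : G.dist s x = G.dist x s := G.dist_comm
      simp only [sTilde, Set.mem_setOf_eq, Set.mem_iUnion, sphere, hc]
      constructor
      · intro hx
        exact ⟨G.dist x s, lt_of_le_of_lt hx (Nat.sub_lt_of_pos_le (by omega) hδ1), rfl⟩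
      · rintro ⟨d, hd, rfl⟩; omega
    ext x
    simp only [transmit, Set.mem_setOf_eq]
    have h1 : (δ - 1) + 1 ≤ G.dist x s ↔ ¬ (x ∈ sTilde G s (δ - 1)) := by
      simp [sTilde]
    have h2 : ha + 1 ≤ G.dist x sa ↔ ¬ (x ∈ sTilde G sa ha) := by
      simp [sTilde]
    rw [h1, h2, hcompl]
  exact ⟨fun W hW s hs => hW (key s hs), key⟩

end Privacy
end
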